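/- arXiv:2504.07230 — 2 statements merged into one kernel-verified Lean document; each statement's English description precedes it below -/
import Mathlib

section
/- The stabilizer Rényi entropy M_α is invariant under Clifford unitaries: if U_C is a unitary mapping the Pauli group to itself under conjugation (up to phases ±1, ±i), then M_α(U_C ρ U_C†) = M_α(ρ) for every density matrix ρ and every Rényi index α. -/
open Matrix BigOperators
open scoped ComplexOrder

/-- The four single-qubit Pauli matrices `I, σx, σy, σz`. -/
noncomputable def pauli : Fin 4 → Matrix (Fin 2) (Fin 2) ℂ :=
  ![1, !![0, 1; 1, 0], !![0, -Complex.I; Complex.I, 0], !![1, 0; 0, -1]]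

/-- The `N`-qubit Pauli string `⊗_k σ_{s k}` as a matrix on `(ℂ²)^⊗N`. -/
noncomputable def PauliString {N : ℕ} (s : Fin N → Fin 4) :
    Matrix (Fin N → Fin 2) (Fin N → Fin 2) ℂ :=
  Matrix.of fun i j => ∏ k, pauli (s k) (i k) (j k)

/-- The Pauli distribution `p_ρ(P) = 2^{-N} tr(ρP)² / tr(ρ²)`. -/
noncomputable def pDist {N : ℕ} (ρ : Matrix (Fin N → Fin 2) (Fin N → Fin 2) ℂ)
    (s : Fin N → Fin 4) : ℝ :=
  ((ρ * PauliString s).trace.re) ^ 2 / ((2 : ℝ) ^ N * ((ρ * ρ).trace.re))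

/-- The `α`-Rényi entropy `H_α[p] = (1/(1-α)) ln Σ_i p(i)^α` of a distribution,
with the Shannon entropy at `α = 1` (its limiting value). -/
noncomputable def renyiH {ι : Type*} [Fintype ι] (α : ℝ) (p : ι → ℝ) : ℝ :=
  if α = 1 then -∑ i, p i * Real.log (p i)
  else (1 - α)⁻¹ * Real.log (∑ i, p i ^ α)

/-- The 2-Rényi entropy `S_2(ρ) = -ln tr(ρ²)`. -/
noncomputable def S2 {N : ℕ} (ρ : Matrix (Fin N → Fin 2) (Fin N → Fin 2) ℂ) : ℝ :=
  -Real.log ((ρ * ρ).trace.re)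

/-- The mixed-state stabilizer Rényi entropy `M̃_α(ρ) = H_α[p_ρ] + S_2(ρ) - N ln 2`. -/
noncomputable def Msre {N : ℕ} (α : ℝ)
    (ρ : Matrix (Fin N → Fin 2) (Fin N → Fin 2) ℂ) : ℝ :=
  renyiH α (pDist ρ) + S2 ρ - N * Real.log 2



lemma pauli_herm (a : Fin 4) : (pauli a)ᴴ = pauli a := by
  fin_cases a <;> ext i j <;> fin_cases i <;> fin_cases j <;>
    simp [pauli, Matrix.conjTranspose_apply]

lemma pauli_trace_mul (a b : Fin 4) :
    ∑ x : Fin 2 × Fin 2, pauli a x.1 x.2 * pauli b x.2 x.1 =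
      if a = b then 2 else 0 := by
  fin_cases a <;> fin_cases b <;>
    simp [pauli, Fintype.sum_prod_type, Fin.sum_univ_two, Matrix.one_apply] <;>
    ring_nf

lemma PauliString_herm {N : ℕ} (s : Fin N → Fin 4) :
    (PauliString s)ᴴ = PauliString s := by
  ext i j
  simp only [Matrix.conjTranspose_apply, PauliString, Matrix.of_apply, star_prod]
  refine Finset.prod_congr rfl fun k _ => ?_
  have := congrFun (congrFun (pauli_herm (s k)) (i k)) (j k)
  simpa [Matrix.conjTranspose_apply] using this

lemma PauliString_trace_mul {N : ℕ} (s t : Fin N → Fin 4) :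
    (PauliString s * PauliString t).trace = if s = t then (2:ℂ)^N else 0 := by
  have key : (PauliString s * PauliString t).trace
      = ∏ k, ∑ x : Fin 2 × Fin 2, pauli (s k) x.1 x.2 * pauli (t k) x.2 x.1 := by
    rw [Finset.prod_univ_sum]
    simp only [Matrix.trace, Matrix.diag_apply, Matrix.mul_apply, PauliString, Matrix.of_apply,
      Fintype.piFinset_univ]
    have h1 : ∀ (i j : Fin N → Fin 2),
        (∏ k, pauli (s k) (i k) (j k)) * ∏ k, pauli (t k) (j k) (i k)
        = ∏ k, (pauli (s k) (i k) (j k) * pauli (t k) (j k) (i k)) :=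
      fun i j => (Finset.prod_mul_distrib).symm
    simp only [h1]
    rw [show (∑ h : Fin N → Fin 2 × Fin 2,
        ∏ k, pauli (s k) (h k).1 (h k).2 * pauli (t k) (h k).2 (h k).1)
      = ∑ p : (Fin N → Fin 2) × (Fin N → Fin 2),
        ∏ k, pauli (s k) (p.1 k) (p.2 k) * pauli (t k) (p.2 k) (p.1 k) from
      Equiv.sum_comp (Equiv.arrowProdEquivProdArrow (Fin N) (fun _ => Fin 2) (fun _ => Fin 2))
        (fun p => ∏ k, pauli (s k) (p.1 k) (p.2 k) * pauli (t k) (p.2 k) (p.1 k))]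
    rw [Fintype.sum_prod_type]
  rw [key]
  by_cases h : s = t
  · subst h; simp [pauli_trace_mul]
  · obtain ⟨k, hk⟩ := Function.ne_iff.mp h
    rw [Finset.prod_eq_zero (Finset.mem_univ k)]
    · simp [h]
    · simp [pauli_trace_mul, hk]

lemma conj_mul_conj {n : Type*} [Fintype n] [DecidableEq n]
    (U A B : Matrix n n ℂ) (hUl : Uᴴ * U = 1) :
    (U * A * Uᴴ) * (U * B * Uᴴ) = U * (A * B) * Uᴴ := by
  simp only [Matrix.mul_assoc]
  rw [← Matrix.mul_assoc Uᴴ U, hUl, Matrix.one_mul]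

lemma trace_conj {n : Type*} [Fintype n] [DecidableEq n]
    (U A : Matrix n n ℂ) (hUl : Uᴴ * U = 1) :
    (U * A * Uᴴ).trace = A.trace := by
  rw [Matrix.trace_mul_cycle, hUl, Matrix.one_mul]

lemma unconj {n : Type*} [Fintype n] [DecidableEq n]
    (U A : Matrix n n ℂ) (hUl : Uᴴ * U = 1) :
    Uᴴ * (U * A * Uᴴ) * U = A := by
  simp only [Matrix.mul_assoc]
  rw [hUl, Matrix.mul_one, ← Matrix.mul_assoc, hUl, Matrix.one_mul]

lemma trace_herm_real {N : ℕ} (A B : Matrix (Fin N → Fin 2) (Fin N → Fin 2) ℂ)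
    (hA : Aᴴ = A) (hB : Bᴴ = B) : (A * B).trace.im = 0 := by
  have h : star ((A * B).trace) = (A * B).trace := by
    rw [← Matrix.trace_conjTranspose, Matrix.conjTranspose_mul, hA, hB,
      Matrix.trace_mul_comm]
  have h2 : -((A * B).trace.im) = (A * B).trace.im := by
    simpa [Complex.conj_im] using congrArg Complex.im h
  linarith

set_option maxHeartbeats 2000000 in
/-- SRE is invariant under Clifford unitaries: if `U` is unitary and conjugation by `U`
maps every Pauli string to a Pauli string up to a phase `±1, ±i`, then
`M_α(U ρ U†) = M_α(ρ)` for every density matrix `ρ` and every Rényi index `α`. -/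
theorem sre_clifford_invariant {N : ℕ} (α : ℝ)
    (ρ U : Matrix (Fin N → Fin 2) (Fin N → Fin 2) ℂ)
    (hpsd : ρ.PosSemidef) (htr : ρ.trace = 1)
    (hU : U ∈ Matrix.unitaryGroup (Fin N → Fin 2) ℂ)
    (hClifford : ∀ s : Fin N → Fin 4, ∃ (s' : Fin N → Fin 4) (c : ℂ),
      (c = 1 ∨ c = -1 ∨ c = Complex.I ∨ c = -Complex.I) ∧
      U * PauliString s * Uᴴ = c • PauliString s') :
    Msre α (U * ρ * Uᴴ) = Msre α ρ := by
  choose σ c hc hconj using hClifford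
  have hUl : Uᴴ * U = 1 := by
    simpa [Matrix.star_eq_conjTranspose] using Matrix.mem_unitaryGroup_iff'.mp hU
  have hcne : ∀ s, c s ≠ 0 := by
    intro s; rcases hc s with h|h|h|h <;> rw [h] <;> simp [Complex.I_ne_zero]
  -- trace of square invariant
  have htr2 : ((U * ρ * Uᴴ) * (U * ρ * Uᴴ)).trace = (ρ * ρ).trace := by
    rw [conj_mul_conj U ρ ρ hUl, trace_conj _ _ hUl]
  -- numerator transform
  have hρh : ρᴴ = ρ := hpsd.1
  have hρ'h : (U * ρ * Uᴴ)ᴴ = U * ρ * Uᴴ := by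
    simp [Matrix.conjTranspose_mul, hρh, Matrix.mul_assoc]
  have hnum : ∀ s, ((U * ρ * Uᴴ) * PauliString (σ s)).trace
      = (c s)⁻¹ * (ρ * PauliString s).trace := by
    intro s
    have hP : PauliString (σ s) = (c s)⁻¹ • (U * PauliString s * Uᴴ) := by
      rw [hconj s, smul_smul, inv_mul_cancel₀ (hcne s), one_smul]
    rw [hP, Matrix.mul_smul, Matrix.trace_smul, smul_eq_mul]
    congr 1
    rw [conj_mul_conj U ρ (PauliString s) hUl, trace_conj _ _ hUl]
  -- pDist invariance
  have hpd : ∀ s, pDist (U * ρ * Uᴴ) (σ s) = pDist ρ s := by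
    intro s
    have him : (ρ * PauliString s).trace.im = 0 :=
      trace_herm_real ρ _ hρh (PauliString_herm s)
    have him' : ((U * ρ * Uᴴ) * PauliString (σ s)).trace.im = 0 :=
      trace_herm_real _ _ hρ'h (PauliString_herm (σ s))
    have hre : (((U * ρ * Uᴴ) * PauliString (σ s)).trace.re) ^ 2
        = ((ρ * PauliString s).trace.re) ^ 2 := by
      set t := (ρ * PauliString s).trace with ht
      rcases hc s with h|h|h|h <;>
        rw [hnum s, h] at him' ⊢ <;>
        simp [Complex.mul_re, Complex.mul_im, Complex.inv_def, Complex.normSq,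
          him] at him' ⊢ <;>
        nlinarith [him, him']
    unfold pDist
    rw [hre, htr2]
  -- injectivity of σ
  have hinj : Function.Injective σ := by
    intro s t hst
    by_contra hne
    have h1 : (c s)⁻¹ • PauliString s = (c t)⁻¹ • PauliString t := by
      have e1 := unconj U (PauliString s) hUl
      have e2 := unconj U (PauliString t) hUl
      calc (c s)⁻¹ • PauliString s = (c s)⁻¹ • (Uᴴ * (U * PauliString s * Uᴴ) * U) := by
            rw [e1]
        _ = Uᴴ * ((c s)⁻¹ • (U * PauliString s * Uᴴ)) * U := by
            simp [Matrix.mul_smul, Matrix.smul_mul]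
        _ = Uᴴ * PauliString (σ s) * U := by
            rw [hconj s, smul_smul, inv_mul_cancel₀ (hcne s), one_smul]
        _ = Uᴴ * PauliString (σ t) * U := by rw [hst]
        _ = Uᴴ * ((c t)⁻¹ • (U * PauliString t * Uᴴ)) * U := by
            rw [hconj t, smul_smul, inv_mul_cancel₀ (hcne t), one_smul]
        _ = (c t)⁻¹ • PauliString t := by
            simp [Matrix.mul_smul, Matrix.smul_mul, e2]
    have h2 : PauliString s = (c s * (c t)⁻¹) • PauliString t := by
      have := congrArg (fun M => (c s) • M) h1
      simpa [smul_smul, mul_inv_cancel₀ (hcne s), mul_comm] using this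
    have h3 : (PauliString s * PauliString t).trace
        = (c s * (c t)⁻¹) * (PauliString t * PauliString t).trace := by
      rw [h2, Matrix.smul_mul, Matrix.trace_smul, smul_eq_mul]
    rw [PauliString_trace_mul, PauliString_trace_mul] at h3
    simp [hne] at h3
    rcases h3 with h3 | h3
    · exact hcne s h3
    · exact hcne t h3
  have hbij : Function.Bijective σ := Finite.injective_iff_bijective.mp hinj
  let e : (Fin N → Fin 4) ≃ (Fin N → Fin 4) := Equiv.ofBijective σ hbij
  have hsum : ∀ F : ℝ → ℝ, ∑ s, F (pDist (U * ρ * Uᴴ) s) = ∑ s, F (pDist ρ s) := by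
    intro F
    rw [← Equiv.sum_comp e (fun s => F (pDist (U * ρ * Uᴴ) s))]
    refine Finset.sum_congr rfl fun s _ => ?_
    simp only [e, Equiv.ofBijective_apply, hpd s]
  -- conclude
  have hH : renyiH α (pDist (U * ρ * Uᴴ)) = renyiH α (pDist ρ) := by
    unfold renyiH
    by_cases hα : α = 1
    · rw [if_pos hα, if_pos hα, hsum (fun x => x * Real.log x)]
    · rw [if_neg hα, if_neg hα, hsum (fun x => x ^ α)]
  unfold Msre S2
  rw [hH, htr2]
end

section
/- For the uniform Pauli spectrum with ⟨ψ|P|ψ⟩² = 1/(2^N+1) on non-identity Pauli strings, the magic capacity equals C_M = 2^{-N}(1 − 2^{-N}) ln²(2^N + 1), and consequently C_M → 0 as N → ∞ while M_1/(N ln 2) → 1. -/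
open Matrix BigOperators
open scoped ComplexOrder
open Filter

private 
lemma key1 (N : ℕ) (f : (Fin N → Fin 4) → ℝ)
    (h0 : f (fun _ => 0) = 1)
    (h1 : ∀ s : Fin N → Fin 4, s ≠ (fun _ => 0) → f s = 1 / ((2 : ℝ) ^ N + 1)) :
    (2 : ℝ) ^ (-(N : ℤ)) * ∑ s : Fin N → Fin 4, f s * Real.log (f s) ^ 2
        - ((2 : ℝ) ^ (-(N : ℤ)) * ∑ s : Fin N → Fin 4, f s * Real.log (f s)) ^ 2
      = (2 : ℝ) ^ (-(N : ℤ)) * (1 - (2 : ℝ) ^ (-(N : ℤ)))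
          * Real.log ((2 : ℝ) ^ N + 1) ^ 2 := by
  set a : ℝ := (2:ℝ)^N with ha
  have hapos : 0 < a := by positivity
  have ha1 : a + 1 ≠ 0 := by positivity
  set c : ℝ := 1 / (a + 1) with hc
  set L : ℝ := Real.log (a + 1) with hL
  have hlogc : Real.log c = -L := by
    rw [hc, one_div, Real.log_inv]
  set s0 : Fin N → Fin 4 := (fun _ => 0) with hs0
  have hcard : ((Finset.univ.erase s0).card : ℝ) = 4 ^ N - 1 := by
    rw [Finset.card_erase_of_mem (Finset.mem_univ _), Finset.card_univ]
    have : Fintype.card (Fin N → Fin 4) = 4 ^ N := by simp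
    rw [this, Nat.cast_sub (Nat.one_le_iff_ne_zero.mpr (by positivity))]
    push_cast; ring
  have hsum2 : ∑ s : Fin N → Fin 4, f s * Real.log (f s) ^ 2
      = (4 ^ N - 1 : ℝ) * (c * L ^ 2) := by
    rw [← Finset.add_sum_erase _ _ (Finset.mem_univ s0), h0]
    rw [Finset.sum_congr rfl (fun s hs => by
      rw [h1 s (Finset.ne_of_mem_erase hs), hlogc]),
      Finset.sum_const, nsmul_eq_mul, hcard]
    simp [Real.log_one]
  have hsum1 : ∑ s : Fin N → Fin 4, f s * Real.log (f s)
      = (4 ^ N - 1 : ℝ) * (c * (-L)) := by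
    rw [← Finset.add_sum_erase _ _ (Finset.mem_univ s0), h0]
    rw [Finset.sum_congr rfl (fun s hs => by
      rw [h1 s (Finset.ne_of_mem_erase hs), hlogc]),
      Finset.sum_const, nsmul_eq_mul, hcard]
    simp [Real.log_one]
  rw [hsum1, hsum2]
  have h4a : (4:ℝ)^N = a * a := by rw [ha, ← mul_pow]; norm_num
  have h2a : (2:ℝ) ^ (-(N:ℤ)) = a⁻¹ := by rw [_root_.zpow_neg, zpow_natCast]
  rw [h2a, hc, h4a]
  field_simp
  ring


private lemma key2 : Filter.Tendsto (fun N : ℕ =>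
      (2 : ℝ) ^ (-(N : ℤ)) * (1 - (2 : ℝ) ^ (-(N : ℤ))) * Real.log ((2 : ℝ) ^ N + 1) ^ 2)
      Filter.atTop (nhds 0) := by
  have hg : Filter.Tendsto (fun n : ℕ => (4 * Real.log 2 ^ 2) * ((n:ℝ)^2 * (1/2)^n))
      atTop (nhds 0) := by
    simpa using (tendsto_pow_const_mul_const_pow_of_lt_one 2
      (by norm_num : (0:ℝ) ≤ 1/2) (by norm_num)).const_mul (4 * Real.log 2 ^ 2)
  apply squeeze_zero_norm' ?_ hg
  filter_upwards [eventually_ge_atTop 1] with n hn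
  have h2n : (1:ℝ) ≤ (2:ℝ)^n := one_le_pow₀ (by norm_num)
  have hz : (2:ℝ) ^ (-(n:ℤ)) = ((2:ℝ)^n)⁻¹ := by rw [_root_.zpow_neg, zpow_natCast]
  have hzpos : 0 < (2:ℝ) ^ (-(n:ℤ)) := by rw [hz]; positivity
  have hzle : (2:ℝ) ^ (-(n:ℤ)) ≤ 1 := by
    rw [hz]; exact inv_le_one_of_one_le₀ h2n
  have hLnn : 0 ≤ Real.log ((2:ℝ)^n + 1) := Real.log_nonneg (by linarith)
  have hnonneg : 0 ≤ (2 : ℝ) ^ (-(n : ℤ)) * (1 - (2 : ℝ) ^ (-(n : ℤ)))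
      * Real.log ((2 : ℝ) ^ n + 1) ^ 2 :=
    mul_nonneg (mul_nonneg hzpos.le (by linarith)) (sq_nonneg _)
  rw [Real.norm_eq_abs, abs_of_nonneg hnonneg]
  have hLle : Real.log ((2:ℝ)^n + 1) ≤ 2 * n * Real.log 2 := by
    have h1 : (2:ℝ)^n + 1 ≤ (2:ℝ)^(2*n) := by
      have h2 : (2:ℝ) ≤ (2:ℝ)^n := by
        calc (2:ℝ) = 2^1 := (pow_one 2).symm
        _ ≤ 2^n := pow_le_pow_right₀ (by norm_num) hn
      rw [two_mul, pow_add]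
      nlinarith
    calc Real.log ((2:ℝ)^n + 1) ≤ Real.log ((2:ℝ)^(2*n)) :=
          Real.log_le_log (by positivity) h1
      _ = 2 * n * Real.log 2 := by rw [Real.log_pow]; push_cast; ring
  calc (2 : ℝ) ^ (-(n : ℤ)) * (1 - (2 : ℝ) ^ (-(n : ℤ))) * Real.log ((2 : ℝ) ^ n + 1) ^ 2
      ≤ (2 : ℝ) ^ (-(n : ℤ)) * 1 * (2 * n * Real.log 2) ^ 2 := by
        apply mul_le_mul
        · apply mul_le_mul_of_nonneg_left _ hzpos.le; linarith
        · exact pow_le_pow_left₀ hLnn hLle 2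
        · positivity
        · positivity
    _ = (4 * Real.log 2 ^ 2) * ((n:ℝ)^2 * (1/2)^n) := by
        rw [hz, one_div, inv_pow]; ring

lemma key3 : Filter.Tendsto (fun N : ℕ =>
      (1 - (2 : ℝ) ^ (-(N : ℤ))) * Real.log ((2 : ℝ) ^ N + 1) / (N * Real.log 2))
      Filter.atTop (nhds 1) := by
  have htwo : Filter.Tendsto (fun n : ℕ => (2:ℝ) ^ (-(n:ℤ))) atTop (nhds 0) := by
    have := tendsto_pow_atTop_nhds_zero_of_lt_one (by norm_num : (0:ℝ) ≤ 1/2) (by norm_num)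
    refine this.congr fun n => ?_
    rw [_root_.zpow_neg, zpow_natCast, one_div, inv_pow]
  have hlog : Filter.Tendsto (fun n : ℕ => Real.log (1 + (2:ℝ) ^ (-(n:ℤ)))) atTop (nhds 0) := by
    have : Filter.Tendsto (fun n : ℕ => (1:ℝ) + (2:ℝ) ^ (-(n:ℤ))) atTop (nhds 1) := by
      simpa using tendsto_const_nhds.add htwo
    have := (Real.continuousAt_log (by norm_num)).tendsto.comp this
    simpa [Function.comp_def] using this
  have hinv : Filter.Tendsto (fun n : ℕ => ((n:ℝ) * Real.log 2)⁻¹) atTop (nhds 0) := by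
    apply Filter.Tendsto.comp tendsto_inv_atTop_zero
    exact Tendsto.atTop_mul_const (Real.log_pos (by norm_num))
      tendsto_natCast_atTop_atTop
  have hmain : Filter.Tendsto (fun n : ℕ =>
      (1 - (2:ℝ)^(-(n:ℤ))) * (1 + Real.log (1 + (2:ℝ)^(-(n:ℤ))) * ((n:ℝ)*Real.log 2)⁻¹))
      atTop (nhds 1) := by
    have : Filter.Tendsto (fun n : ℕ => (1 - (2:ℝ)^(-(n:ℤ)))) atTop (nhds 1) := by
      simpa using tendsto_const_nhds.sub htwo
    simpa using this.mul (tendsto_const_nhds.add (hlog.mul hinv))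
  refine hmain.congr' ?_
  filter_upwards [eventually_ge_atTop 1] with n hn
  have hnpos : 0 < (n:ℝ) := by exact_mod_cast hn
  have hlog2 : Real.log 2 ≠ 0 := ne_of_gt (Real.log_pos (by norm_num))
  have h2npos : (0:ℝ) < (2:ℝ)^n := by positivity
  have hz : (2:ℝ) ^ (-(n:ℤ)) = ((2:ℝ)^n)⁻¹ := by rw [_root_.zpow_neg, zpow_natCast]
  have hLsplit : Real.log ((2:ℝ)^n + 1) = n * Real.log 2 + Real.log (1 + (2:ℝ)^(-(n:ℤ))) := by
    have : (2:ℝ)^n + 1 = (2:ℝ)^n * (1 + (2:ℝ)^(-(n:ℤ))) := by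
      rw [hz]; field_simp
    rw [this, Real.log_mul (by positivity) (by rw [hz]; positivity), Real.log_pow]
  rw [hLsplit]
  field_simp

/-- For the uniform Pauli spectrum (`f(I) = 1`, `f(P) = 1/(2^N+1)` otherwise), the magic
capacity `C_M = E_{P∼p}[ln² f(P)] - M_1²` (with `p(P) = 2^{-N} f(P)`,
`M_1 = -E_{P∼p}[ln f(P)]`) equals `2^{-N}(1-2^{-N}) ln²(2^N+1)`; consequently
`C_M → 0` while `M_1/(N ln 2) → 1` as `N → ∞`. -/
theorem uniform_spectrum_capacity :
    (∀ (N : ℕ) (f : (Fin N → Fin 4) → ℝ),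
      f (fun _ => 0) = 1 →
      (∀ s : Fin N → Fin 4, s ≠ (fun _ => 0) → f s = 1 / ((2 : ℝ) ^ N + 1)) →
      (2 : ℝ) ^ (-(N : ℤ)) * ∑ s : Fin N → Fin 4, f s * Real.log (f s) ^ 2
        - ((2 : ℝ) ^ (-(N : ℤ)) * ∑ s : Fin N → Fin 4, f s * Real.log (f s)) ^ 2
      = (2 : ℝ) ^ (-(N : ℤ)) * (1 - (2 : ℝ) ^ (-(N : ℤ)))
          * Real.log ((2 : ℝ) ^ N + 1) ^ 2) ∧
    Filter.Tendsto (fun N : ℕ =>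
      (2 : ℝ) ^ (-(N : ℤ)) * (1 - (2 : ℝ) ^ (-(N : ℤ))) * Real.log ((2 : ℝ) ^ N + 1) ^ 2)
      Filter.atTop (nhds 0) ∧
    Filter.Tendsto (fun N : ℕ =>
      (1 - (2 : ℝ) ^ (-(N : ℤ))) * Real.log ((2 : ℝ) ^ N + 1) / (N * Real.log 2))
      Filter.atTop (nhds 1) := by
  exact ⟨key1, key2, key3⟩
end
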